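/- Every YES-instance (D,K,T) of MD-SPP has a solution path cover whose union contains at most 2^{|K|} + |K| distinct vertices. -/

import Mathlib

open Relation

variable {V : Type*} [DecidableEq V]

/-- The adjacency relation of a digraph given by its edge set. -/
def Adj (E : Finset (V × V)) : V → V → Prop := fun a b => (a, b) ∈ E

/-- `D` is a digraph: no self-loops (no parallel edges since edges form a set). -/
def IsDigraph (D : Finset (V × V)) : Prop := ∀ e ∈ D, e.1 ≠ e.2

/-- `l` is a directed `s`-`t`-path w.r.t. the adjacency relation `A`:
a nonempty duplicate-free list of vertices, consecutive ones adjacent,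
starting at `s` and ending at `t`. -/
def DiPath (A : V → V → Prop) (s t : V) (l : List V) : Prop :=
  l.Chain' A ∧ l.Nodup ∧ l.head? = some s ∧ l.getLast? = some t

/-- Adjacency in the transitive closure `T(D)` of the digraph with edge set `E`:
`(u,v)` is an edge iff `u ≠ v` and `v` is reachable from `u` in `E`. -/
def TCAdj (E : Finset (V × V)) (u v : V) : Prop :=
  u ≠ v ∧ Relation.ReflTransGen (Adj E) u v

/-- The outdegree of `v` in the digraph with edge set `H`. -/
def outDeg (H : Finset (V × V)) (v : V) : ℕ :=
  (H.filter fun e => e.1 = v).card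

/-- The list of (directed) edges traversed by a list of vertices. -/
def listEdges (l : List V) : List (V × V) := l.zip l.tail

/-- The routed commodities in `K` are valid: for `(s,t,P) ∈ K`,
`P` is a directed `s`-`t`-path in `D`. -/
def ValidSPP (D : Finset (V × V)) (K : Finset (V × V × List V)) : Prop :=
  ∀ k ∈ K, DiPath (Adj D) k.1 k.2.1 k.2.2

/-- `H` is a solution graph of the MD-SPP instance `(D,K,T)`: a subgraph of
`T(D)` of maximum outdegree at most `T` such that every routed commodity
`(s,t,P) ∈ K` has a directed `s`-`t`-path in `H ∩ T(P)`, i.e. an `s`-`t`-path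
whose edges are in `H` and whose vertices lie on `P` in the same order
(a sublist of `P`). -/
def SPPSolution (D : Finset (V × V)) (K : Finset (V × V × List V)) (T : ℕ)
    (H : Finset (V × V)) : Prop :=
  (∀ e ∈ H, TCAdj D e.1 e.2) ∧ (∀ v, outDeg H v ≤ T) ∧
  (∀ k ∈ K, ∃ l, DiPath (Adj H) k.1 k.2.1 l ∧ l.Sublist k.2.2)

/-!
Take a family of witness paths whose union respects the outdegree bound and has minimal total
length, and label each vertex of the union by the set of commodities whose witness path visits
it. If two distinct non-source vertices `u ≠ v` had the same label, every witness path through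
them would read `… p, e, …, f, …` with `{e, f} = {u, v}`; replacing `p, e, …, f` by the edge
`(p, f)` shortens it. Swapping `u` and `v` maps every edge of the new union to an edge of the old
one with the same start vertex, so outdegrees do not grow, contradicting minimality. Hence the labels of
non-source vertices are distinct subsets of `K`, and there are at most `|K|` sources.
-/

section Lists

variable {α : Type*}

@[simp] lemma listEdges_nil : listEdges ([] : List α) = [] := rfl

@[simp] lemma listEdges_singleton (a : α) : listEdges [a] = [] := rfl

@[simp] lemma listEdges_cons_cons (a b : α) (l : List α) :
    listEdges (a :: b :: l) = (a, b) :: listEdges (b :: l) := rfl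

lemma listEdges_append_cons (l₁ : List α) (b : α) (l₂ : List α) :
    listEdges (l₁ ++ b :: l₂) = listEdges (l₁ ++ [b]) ++ listEdges (b :: l₂) := by
  induction l₁ with
  | nil => rfl
  | cons a l₁ ih =>
    cases l₁ with
    | nil => rfl
    | cons c l₁ => simpa using ih

lemma mem_listEdges_iff {l : List α} {a b : α} :
    (a, b) ∈ listEdges l ↔ ∃ l₁ l₂, l = l₁ ++ a :: b :: l₂ := by
  constructor
  · intro h
    induction l with
    | nil => simp at h
    | cons c l ih =>
      cases l with
      | nil => simp at h
      | cons d l =>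
        rcases List.mem_cons.1 h with h | h
        · obtain ⟨rfl, rfl⟩ := Prod.mk.inj h
          exact ⟨[], l, rfl⟩
        · obtain ⟨l₁, l₂, hl⟩ := ih h
          exact ⟨c :: l₁, l₂, by rw [hl]; rfl⟩
  · rintro ⟨l₁, l₂, rfl⟩
    rw [listEdges_append_cons]
    simp

lemma snd_mem_tail_of_mem_listEdges {l : List α} {x : α × α} (hx : x ∈ listEdges l) :
    x.2 ∈ l.tail :=
  (List.of_mem_zip hx).2

lemma isChain_iff_forall_mem_listEdges {R : α → α → Prop} {l : List α} :
    l.IsChain R ↔ ∀ x ∈ listEdges l, R x.1 x.2 := by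
  rw [List.isChain_iff_forall_rel_of_append_cons_cons]
  constructor
  · rintro h ⟨a, b⟩ hx
    obtain ⟨l₁, l₂, hl⟩ := mem_listEdges_iff.1 hx
    exact h hl
  · intro h a b l₁ l₂ hl
    exact h (a, b) (mem_listEdges_iff.2 ⟨l₁, l₂, hl⟩)

lemma pair_sublist_of_mem_listEdges {l : List α} {a b : α} (h : (a, b) ∈ listEdges l) :
    [a, b].Sublist l := by
  obtain ⟨l₁, l₂, rfl⟩ := mem_listEdges_iff.1 h
  simp

lemma reflTransGen_of_isChain_of_pair_sublist {R : α → α → Prop} {l : List α} {a b : α}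
    (hl : l.IsChain R) (hab : [a, b].Sublist l) : ReflTransGen R a b :=
  List.pairwise_pair.1 <|
    (List.isChain_iff_pairwise.1 (hl.imp fun _ _ => ReflTransGen.single)).sublist hab

lemma exists_eq_append_cons_append_cons {l : List α} {u v : α} (hu : u ∈ l) (hv : v ∈ l)
    (huv : u ≠ v) :
    ∃ X e Y f Z, l = X ++ e :: (Y ++ f :: Z) ∧ ((e = u ∧ f = v) ∨ (e = v ∧ f = u)) := by
  obtain ⟨A, B, rfl⟩ := List.append_of_mem hu
  rcases List.mem_append.1 hv with hvA | hvB
  · obtain ⟨X, Y, rfl⟩ := List.append_of_mem hvA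
    exact ⟨X, v, Y, u, B, by simp, Or.inr ⟨rfl, rfl⟩⟩
  · obtain ⟨Y, Z, rfl⟩ := List.append_of_mem ((List.mem_cons.1 hvB).resolve_left huv.symm)
    exact ⟨A, u, Y, v, Z, rfl, Or.inl ⟨rfl, rfl⟩⟩

lemma exists_eq_append_cons_cons_append_cons {l : List α} {s u v : α}
    (hs : l.head? = some s) (hu : u ∈ l) (hv : v ∈ l) (huv : u ≠ v) (hus : u ≠ s)
    (hvs : v ≠ s) :
    ∃ W p e Y f Z, l = W ++ p :: e :: (Y ++ f :: Z) ∧ ((e = u ∧ f = v) ∨ (e = v ∧ f = u)) := by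
  obtain ⟨X, e, Y, f, Z, rfl, hef⟩ := exists_eq_append_cons_append_cons hu hv huv
  rcases List.eq_nil_or_concat X with rfl | ⟨W, p, rfl⟩
  · obtain rfl : e = s := by simpa using hs
    rcases hef with ⟨rfl, -⟩ | ⟨rfl, -⟩ <;> contradiction
  · exact ⟨W, p, e, Y, f, Z, by simp, hef⟩

def IsShortcut (σ : Equiv.Perm α) (l' l : List α) : Prop :=
  l'.Sublist l ∧ l'.head? = l.head? ∧ l'.getLast? = l.getLast? ∧
    ∀ x ∈ listEdges l', (x.1, σ x.2) ∈ listEdges l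

variable [DecidableEq α]

lemma isShortcut_self_of_not_mem {l : List α} {u v : α} (hu : u ∉ l) (hv : v ∉ l) :
    IsShortcut (Equiv.swap u v) l l := by
  refine ⟨List.Sublist.refl l, rfl, rfl, fun x hx => ?_⟩
  have hx₂ : x.2 ∈ l := List.mem_of_mem_tail (snd_mem_tail_of_mem_listEdges hx)
  rwa [Equiv.swap_apply_of_ne_of_ne (ne_of_mem_of_not_mem hx₂ hu)
    (ne_of_mem_of_not_mem hx₂ hv)]

/-- The only new edge `(p, f)` is sent by `swap e f` to the old edge `(p, e)`; by `Nodup`, the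
end vertices of all other edges avoid `e` and `f`. -/
lemma isShortcut_swap {W Y Z : List α} {p e f : α} (hl : (W ++ p :: e :: (Y ++ f :: Z)).Nodup) :
    IsShortcut (Equiv.swap e f) (W ++ p :: f :: Z) (W ++ p :: e :: (Y ++ f :: Z)) := by
  have hfree : e ∉ W ++ [p] ∧ f ∉ W ++ [p] ∧ e ∉ Z ∧ f ∉ Z := by
    grind [List.nodup_append, List.nodup_cons]
  have hsplit : e :: (Y ++ f :: Z) = (e :: Y) ++ f :: Z := rfl
  refine ⟨by simp, by cases W <;> rfl, by simp [List.getLast?_append, List.getLast?_cons], ?_⟩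
  intro x hx
  rw [listEdges_append_cons, listEdges_cons_cons] at hx
  rw [listEdges_append_cons, listEdges_cons_cons, hsplit, listEdges_append_cons (e :: Y)]
  simp only [List.mem_append, List.mem_cons] at hx ⊢
  rcases hx with hx | rfl | hx
  · have hx₂ : x.2 ∈ W ++ [p] := List.mem_of_mem_tail (snd_mem_tail_of_mem_listEdges hx)
    rw [Equiv.swap_apply_of_ne_of_ne (ne_of_mem_of_not_mem hx₂ hfree.1)
      (ne_of_mem_of_not_mem hx₂ hfree.2.1)]
    exact Or.inl hx
  · simp
  · have hx₂ : x.2 ∈ Z := snd_mem_tail_of_mem_listEdges hx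
    rw [Equiv.swap_apply_of_ne_of_ne (ne_of_mem_of_not_mem hx₂ hfree.2.2.1)
      (ne_of_mem_of_not_mem hx₂ hfree.2.2.2)]
    exact Or.inr (Or.inr (Or.inr hx))

lemma exists_isShortcut_swap {l : List α} {s u v : α} (hl : l.Nodup) (hs : l.head? = some s)
    (hu : u ∈ l) (hv : v ∈ l) (huv : u ≠ v) (hus : u ≠ s) (hvs : v ≠ s) :
    ∃ l', IsShortcut (Equiv.swap u v) l' l ∧ l'.length < l.length := by
  obtain ⟨W, p, e, Y, f, Z, rfl, hef⟩ :=
    exists_eq_append_cons_cons_append_cons hs hu hv huv hus hvs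
  have hswap : Equiv.swap u v = Equiv.swap e f := by
    rcases hef with ⟨rfl, rfl⟩ | ⟨rfl, rfl⟩
    · rfl
    · exact Equiv.swap_comm _ _
  exact ⟨_, hswap ▸ isShortcut_swap hl, by simp⟩

end Lists

lemma Finset.card_le_two_pow_add_card {ι α : Type*} [DecidableEq α] (K : Finset ι)
    (U : Finset α) (g : ι → α) (τ : α → Finset ι) (hτ : ∀ x, τ x ⊆ K)
    (hinj : Set.InjOn τ ↑(U \ K.image g)) :
    U.card ≤ 2 ^ K.card + K.card :=
  calc U.card ≤ (U \ K.image g).card + (K.image g).card := Finset.card_le_card_sdiff_add_card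
    _ ≤ K.powerset.card + K.card :=
      add_le_add (Finset.card_le_card_of_injOn τ (fun x _ => Finset.mem_powerset.2 (hτ x)) hinj)
        Finset.card_image_le
    _ = 2 ^ K.card + K.card := by rw [Finset.card_powerset]

lemma outDeg_mono {H H' : Finset (V × V)} (h : H ⊆ H') (v : V) : outDeg H v ≤ outDeg H' v :=
  Finset.card_le_card (Finset.filter_subset_filter _ h)

lemma outDeg_le_of_forall_perm_snd_mem (σ : Equiv.Perm V) {H H' : Finset (V × V)}
    (h : ∀ x ∈ H, (x.1, σ x.2) ∈ H') (v : V) : outDeg H v ≤ outDeg H' v := by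
  refine Finset.card_le_card_of_injOn (fun x => (x.1, σ x.2)) (fun x hx => ?_) ?_
  · simp only [Finset.coe_filter, Set.mem_ofPred_eq] at hx ⊢
    exact ⟨h x hx.1, hx.2⟩
  · intro x _ y _ hxy
    simp only [Prod.mk.injEq, EmbeddingLike.apply_eq_iff_eq] at hxy
    exact Prod.ext hxy.1 hxy.2

section PathFamilies

variable {K : Finset (V × V × List V)} {T : ℕ} {Q Q' : V × V × List V → List V}

def coverEdges (K : Finset (V × V × List V)) (Q : V × V × List V → List V) : Finset (V × V) :=
  K.biUnion fun k => (listEdges (Q k)).toFinset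

lemma mem_coverEdges {x : V × V} : x ∈ coverEdges K Q ↔ ∃ k ∈ K, x ∈ listEdges (Q k) := by
  simp only [coverEdges, Finset.mem_biUnion, List.mem_toFinset]

/-- For a valid instance these are exactly the solution path covers. -/
def IsFeasibleFamily (K : Finset (V × V × List V)) (T : ℕ) (Q : V × V × List V → List V) :
    Prop :=
  (∀ k ∈ K, (Q k).Sublist k.2.2 ∧ (Q k).head? = some k.1 ∧ (Q k).getLast? = some k.2.1) ∧
    ∀ v, outDeg (coverEdges K Q) v ≤ T

lemma SPPSolution.exists_isFeasibleFamily {D H : Finset (V × V)} (hH : SPPSolution D K T H) :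
    ∃ Q, IsFeasibleFamily K T Q := by
  obtain ⟨-, hdeg, hpaths⟩ := hH
  choose l hl hsub using hpaths
  refine ⟨fun k => if hk : k ∈ K then l k hk else [], fun k hk => ?_, fun v => ?_⟩
  · obtain ⟨-, -, hhead, hlast⟩ := hl k hk
    simpa only [dif_pos hk] using ⟨hsub k hk, hhead, hlast⟩
  · refine (outDeg_mono (fun x hx => ?_) v).trans (hdeg v)
    obtain ⟨k, hk, hx⟩ := mem_coverEdges.1 hx
    rw [dif_pos hk] at hx
    exact isChain_iff_forall_mem_listEdges.1 (hl k hk).1 x hx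

lemma IsFeasibleFamily.sppSolution {D : Finset (V × V)} (hK : ValidSPP D K)
    (hQ : IsFeasibleFamily K T Q) : SPPSolution D K T (coverEdges K Q) := by
  refine ⟨fun x hx => ?_, hQ.2, fun k hk => ?_⟩
  · obtain ⟨k, hk, hx⟩ := mem_coverEdges.1 hx
    obtain ⟨hchain, hnodup, -, -⟩ := hK k hk
    have hpair := (pair_sublist_of_mem_listEdges hx).trans (hQ.1 k hk).1
    exact ⟨by simpa using hpair.nodup hnodup, reflTransGen_of_isChain_of_pair_sublist hchain hpair⟩
  · obtain ⟨hsub, hhead, hlast⟩ := hQ.1 k hk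
    refine ⟨Q k, ⟨?_, hsub.nodup (hK k hk).2.1, hhead, hlast⟩, hsub⟩
    exact isChain_iff_forall_mem_listEdges.2 fun x hx => mem_coverEdges.2 ⟨k, hk, hx⟩

lemma IsFeasibleFamily.of_isShortcut (σ : Equiv.Perm V) (hQ : IsFeasibleFamily K T Q)
    (h : ∀ k ∈ K, IsShortcut σ (Q' k) (Q k)) : IsFeasibleFamily K T Q' := by
  refine ⟨fun k hk => ?_, fun v =>
    (outDeg_le_of_forall_perm_snd_mem σ (fun x hx => ?_) v).trans (hQ.2 v)⟩
  · obtain ⟨hsub', hhead', hlast', -⟩ := h k hk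
    obtain ⟨hsub, hhead, hlast⟩ := hQ.1 k hk
    exact ⟨hsub'.trans hsub, hhead'.trans hhead, hlast'.trans hlast⟩
  · obtain ⟨k, hk, hx⟩ := mem_coverEdges.1 hx
    exact mem_coverEdges.2 ⟨k, hk, (h k hk).2.2.2 x hx⟩

lemma IsFeasibleFamily.exists_shorter (hQ : IsFeasibleFamily K T Q)
    (hnodup : ∀ k ∈ K, (Q k).Nodup) {u v : V} (huv : u ≠ v) (hu : ∃ k ∈ K, u ∈ Q k)
    (hus : ∀ k ∈ K, u ≠ k.1) (hvs : ∀ k ∈ K, v ≠ k.1) (htype : ∀ k ∈ K, u ∈ Q k ↔ v ∈ Q k) :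
    ∃ Q', IsFeasibleFamily K T Q' ∧ ∑ k ∈ K, (Q' k).length < ∑ k ∈ K, (Q k).length := by
  have hcut (k) (h : k ∈ K ∧ u ∈ Q k) :
      ∃ l, IsShortcut (Equiv.swap u v) l (Q k) ∧ l.length < (Q k).length :=
    exists_isShortcut_swap (hnodup k h.1) (hQ.1 k h.1).2.1 h.2 ((htype k h.1).1 h.2) huv
      (hus k h.1) (hvs k h.1)
  choose cut hcut hlt using hcut
  let Q' k := if h : k ∈ K ∧ u ∈ Q k then cut k h else Q k
  have hQ' : ∀ k ∈ K, IsShortcut (Equiv.swap u v) (Q' k) (Q k) := by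
    intro k hk
    by_cases hku : u ∈ Q k
    · simpa only [Q', dif_pos (And.intro hk hku)] using hcut k ⟨hk, hku⟩
    · simpa only [Q', dif_neg (not_and_of_not_right _ hku)] using
        isShortcut_self_of_not_mem hku (mt (htype k hk).2 hku)
  obtain ⟨k₀, hk₀, hu₀⟩ := hu
  refine ⟨Q', hQ.of_isShortcut _ hQ',
    Finset.sum_lt_sum (fun k hk => (hQ' k hk).1.length_le) ⟨k₀, hk₀, ?_⟩⟩
  simpa only [Q', dif_pos (And.intro hk₀ hu₀)] using hlt k₀ ⟨hk₀, hu₀⟩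

lemma IsFeasibleFamily.injOn_of_minimal (hQ : IsFeasibleFamily K T Q)
    (hnodup : ∀ k ∈ K, (Q k).Nodup)
    (hmin : ∀ Q', IsFeasibleFamily K T Q' → ∑ k ∈ K, (Q k).length ≤ ∑ k ∈ K, (Q' k).length) :
    Set.InjOn (fun x => K.filter fun k => x ∈ Q k)
      ↑((K.biUnion fun k => (Q k).toFinset) \ K.image Prod.fst) := by
  intro u hu v hv huv
  by_contra hne
  simp only [Finset.coe_sdiff, Set.mem_sdiff, Finset.mem_coe, Finset.mem_biUnion,
    List.mem_toFinset, Finset.mem_image, not_exists, not_and] at hu hv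
  obtain ⟨Q', hQ', hlt⟩ := hQ.exists_shorter hnodup hne hu.1 (fun k hk h => hu.2 k hk h.symm)
    (fun k hk h => hv.2 k hk h.symm) (Finset.filter_inj'.1 huv)
  exact (hmin Q' hQ').not_gt hlt

end PathFamilies

theorem mdspp_small_solution_path_cover_general {V : Type*} [DecidableEq V]
    (D : Finset (V × V)) (K : Finset (V × V × List V)) (T : ℕ)
    (hKvalid : ValidSPP D K)
    (hyes : ∃ H : Finset (V × V), SPPSolution D K T H) :
    ∃ Q : V × V × List V → List V,
      (∀ k ∈ K, (Q k).Sublist k.2.2 ∧ (Q k).head? = some k.1 ∧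
        (Q k).getLast? = some k.2.1) ∧
      SPPSolution D K T (K.biUnion fun k => (listEdges (Q k)).toFinset) ∧
      (K.biUnion fun k => (Q k).toFinset).card ≤ 2 ^ K.card + K.card := by
  obtain ⟨H, hH⟩ := hyes
  obtain ⟨Q, hQ, hmin⟩ := (measure fun Q : V × V × List V → List V => ∑ k ∈ K, (Q k).length).wf
    |>.has_min {Q | IsFeasibleFamily K T Q} hH.exists_isFeasibleFamily
  have hnodup : ∀ k ∈ K, (Q k).Nodup := fun k hk => (hQ.1 k hk).1.nodup (hKvalid k hk).2.1
  refine ⟨Q, hQ.1, hQ.sppSolution hKvalid, ?_⟩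
  exact Finset.card_le_two_pow_add_card K _ Prod.fst _ (fun _ => Finset.filter_subset _ _)
    (hQ.injOn_of_minimal hnodup fun Q' hQ' => not_lt.1 (hmin Q' hQ'))

/-- Every YES-instance `(D,K,T)` of MD-SPP has a solution path
cover (a family `Q` of witness paths, one per routed commodity `(s,t,P)`:
a directed `s`-`t`-path in `T(P)`, i.e. a sublist of `P` from `s` to `t`, whose
union is a solution graph) whose union contains at most `2^|K| + |K|` distinct
vertices. -/
theorem mdspp_small_solution_path_cover {V : Type*} [Fintype V] [DecidableEq V]
    (D : Finset (V × V)) (K : Finset (V × V × List V)) (T : ℕ)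
    (hD : IsDigraph D) (hKvalid : ValidSPP D K)
    (hyes : ∃ H : Finset (V × V), SPPSolution D K T H) :
    ∃ Q : V × V × List V → List V,
      (∀ k ∈ K, (Q k).Sublist k.2.2 ∧ (Q k).head? = some k.1 ∧
        (Q k).getLast? = some k.2.1) ∧
      SPPSolution D K T (K.biUnion fun k => (listEdges (Q k)).toFinset) ∧
      (K.biUnion fun k => (Q k).toFinset).card ≤ 2 ^ K.card + K.card :=
  mdspp_small_solution_path_cover_general D K T hKvalid hyes
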